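/- arXiv:1803.10881 — 6 statements merged into one kernel-verified Lean document; each statement's English description precedes it below -/
import Mathlib

section
/- Suppose T_b < T_b⁰ and that X₂'X₂ and Z₂'MZ₂ are invertible. Then for every δ ∈ ℝ^p one has δ'[Z₀'MZ₀ − (Z₀'MZ₂)(Z₂'MZ₂)⁻¹(Z₂'MZ₀)]δ ≥ δ'[R'(X_Δ'X_Δ)(X₂'X₂)⁻¹(X₀'X₀)R]δ; that is, the difference of these two p×p matrices is positive semidefinite (in the quadratic-form sense). -/
open Matrix

private lemma dp_symm {n m : ℕ} (A : Matrix (Fin n) (Fin m) ℝ) (x : Fin n → ℝ) (y : Fin m → ℝ) :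
    x ⬝ᵥ (A *ᵥ y) = y ⬝ᵥ (Aᵀ *ᵥ x) := by
  rw [dotProduct_mulVec, mulVec_transpose, dotProduct_comm]

private lemma dp_self_nonneg {n : ℕ} (x : Fin n → ℝ) : 0 ≤ x ⬝ᵥ x :=
  Finset.sum_nonneg fun i _ => mul_self_nonneg _

private lemma qf_factor {m n : ℕ} (B : Matrix (Fin m) (Fin n) ℝ) (x : Fin n → ℝ) :
    x ⬝ᵥ ((Bᵀ * B) *ᵥ x) = (B *ᵥ x) ⬝ᵥ (B *ᵥ x) := by
  rw [← mulVec_mulVec, dp_symm, transpose_transpose]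

private lemma dp_orth {T n m : ℕ} (P : Matrix (Fin T) (Fin n) ℝ) (Q : Matrix (Fin T) (Fin m) ℝ)
    (h : Pᵀ * Q = 0) (x : Fin n → ℝ) (y : Fin m → ℝ) :
    (P *ᵥ x) ⬝ᵥ (Q *ᵥ y) = 0 := by
  rw [dotProduct_comm, dp_symm, mulVec_mulVec, h, zero_mulVec, dotProduct_zero]

private lemma dp_conj {T n m : ℕ} (A : Matrix (Fin T) (Fin n) ℝ) (C : Matrix (Fin T) (Fin m) ℝ)
    (Mm : Matrix (Fin T) (Fin T) ℝ) (x : Fin n → ℝ) (y : Fin m → ℝ) :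
    (A *ᵥ x) ⬝ᵥ (Mm *ᵥ (C *ᵥ y)) = x ⬝ᵥ ((Aᵀ * Mm * C) *ᵥ y) := by
  rw [mulVec_mulVec, dotProduct_comm, dp_symm, mulVec_mulVec, Matrix.mul_assoc]

private lemma par_sum {n : ℕ} (A B : Matrix (Fin n) (Fin n) ℝ) (hA : Aᵀ = A) (hB : Bᵀ = B)
    (hdet : IsUnit (A + B).det) (hpsd : ∀ x : Fin n → ℝ, 0 ≤ x ⬝ᵥ ((A + B) *ᵥ x))
    (d c : Fin n → ℝ) :
    d ⬝ᵥ ((A * (A + B)⁻¹ * B) *ᵥ d) ≤ (d - c) ⬝ᵥ (A *ᵥ (d - c)) + c ⬝ᵥ (B *ᵥ c) := by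
  set S := A + B with hS
  have hSs : Sᵀ = S := by rw [hS, transpose_add, hA, hB]
  have hSis : (S⁻¹)ᵀ = S⁻¹ := by rw [transpose_nonsing_inv, hSs]
  have hSr : S * S⁻¹ = 1 := mul_nonsing_inv _ hdet
  have hSl : S⁻¹ * S = 1 := nonsing_inv_mul _ hdet
  set c' : Fin n → ℝ := S⁻¹ *ᵥ (A *ᵥ d) with hc'
  have hSc' : S *ᵥ c' = A *ᵥ d := by
    rw [hc', mulVec_mulVec, mulVec_mulVec, hSr, Matrix.one_mul]
  have e1 : c ⬝ᵥ (S *ᵥ c') = d ⬝ᵥ (A *ᵥ c) := by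
    rw [hSc', dp_symm, hA]
  have e2 : c' ⬝ᵥ (S *ᵥ c) = d ⬝ᵥ (A *ᵥ c) := by
    rw [dp_symm, hSs, e1]
  have e3 : c' ⬝ᵥ (S *ᵥ c') = d ⬝ᵥ ((A * S⁻¹ * A) *ᵥ d) := by
    rw [hSc', hc', mulVec_mulVec, dotProduct_comm, dp_symm, mulVec_mulVec,
      transpose_mul, hSis, hA]
  have e4 : c ⬝ᵥ (A *ᵥ d) = d ⬝ᵥ (A *ᵥ c) := by rw [dp_symm, hA]
  have hBSA : B = S - A := by rw [hS]; abel
  have key : A * S⁻¹ * B = A - A * S⁻¹ * A := by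
    rw [hBSA, Matrix.mul_sub, Matrix.mul_assoc A S⁻¹ S, hSl, Matrix.mul_one]
  have e5 : d ⬝ᵥ ((A * S⁻¹ * B) *ᵥ d) = d ⬝ᵥ (A *ᵥ d) - d ⬝ᵥ ((A * S⁻¹ * A) *ᵥ d) := by
    rw [key, sub_mulVec, dotProduct_sub]
  have hsq : 0 ≤ (c - c') ⬝ᵥ (S *ᵥ (c - c')) := hpsd _
  have expand : (c - c') ⬝ᵥ (S *ᵥ (c - c')) =
      c ⬝ᵥ (S *ᵥ c) - 2 * (d ⬝ᵥ (A *ᵥ c)) + d ⬝ᵥ ((A * S⁻¹ * A) *ᵥ d) := by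
    rw [mulVec_sub, dotProduct_sub, sub_dotProduct, sub_dotProduct, e1, e2, e3]
    ring
  have expand2 : (d - c) ⬝ᵥ (A *ᵥ (d - c)) + c ⬝ᵥ (B *ᵥ c) =
      d ⬝ᵥ (A *ᵥ d) - 2 * (d ⬝ᵥ (A *ᵥ c)) + c ⬝ᵥ (S *ᵥ c) := by
    have hcS : c ⬝ᵥ (S *ᵥ c) = c ⬝ᵥ (A *ᵥ c) + c ⬝ᵥ (B *ᵥ c) := by
      rw [hS, add_mulVec, dotProduct_add]
    rw [mulVec_sub, dotProduct_sub, sub_dotProduct, sub_dotProduct, e4, hcS]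
    ring
  rw [e5]
  linarith [hsq, expand, expand2]

/-- Lemma A.1 of Bai (1997), case `T_b < T_b⁰` (eq. (36) in the paper):
the quadratic form of
`Z₀'MZ₀ − (Z₀'MZ₂)(Z₂'MZ₂)⁻¹(Z₂'MZ₀)` dominates that of
`R'(X_Δ'X_Δ)(X₂'X₂)⁻¹(X₀'X₀)R`. -/
theorem statement0
    (T q p : ℕ) (hT : 0 < T) (hq : 0 < q) (hp : 0 < p)
    (Tb Tb0 : ℕ) (hTbpos : 0 < Tb) (hTbT : Tb < T) (hTb0pos : 0 < Tb0) (hTb0T : Tb0 < T)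
    (hlt : Tb < Tb0)
    (X X₂ X₀ XΔ : Matrix (Fin T) (Fin (q + p)) ℝ)
    (hX₂ : ∀ i j, X₂ i j = if Tb ≤ (i : ℕ) then X i j else 0)
    (hX₀ : ∀ i j, X₀ i j = if Tb0 ≤ (i : ℕ) then X i j else 0)
    (hXΔ : XΔ = X₂ - X₀)
    (R : Matrix (Fin (q + p)) (Fin p) ℝ) (hR : R.rank = p)
    (Z₂ Z₀ : Matrix (Fin T) (Fin p) ℝ)
    (hZ₂ : Z₂ = X₂ * R) (hZ₀ : Z₀ = X₀ * R)
    (hXX : IsUnit (Xᵀ * X).det)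
    (M : Matrix (Fin T) (Fin T) ℝ)
    (hM : M = 1 - X * (Xᵀ * X)⁻¹ * Xᵀ)
    (hX₂X₂ : IsUnit (X₂ᵀ * X₂).det)
    (hZMZ : IsUnit (Z₂ᵀ * M * Z₂).det) :
    ∀ δ : Fin p → ℝ,
      δ ⬝ᵥ ((Z₀ᵀ * M * Z₀ - (Z₀ᵀ * M * Z₂) * (Z₂ᵀ * M * Z₂)⁻¹ * (Z₂ᵀ * M * Z₀)) *ᵥ δ)
        ≥ δ ⬝ᵥ ((Rᵀ * (XΔᵀ * XΔ) * (X₂ᵀ * X₂)⁻¹ * (X₀ᵀ * X₀) * R) *ᵥ δ) := by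
  intro δ
  set G := (Xᵀ * X)⁻¹ with hG
  have hGs : Gᵀ = G := by
    rw [hG, transpose_nonsing_inv, transpose_mul, transpose_transpose]
  have hGl : G * (Xᵀ * X) = 1 := nonsing_inv_mul _ hXX
  have hMs : Mᵀ = M := by
    rw [hM]
    simp only [transpose_sub, transpose_one, transpose_mul, transpose_transpose, hGs,
      Matrix.mul_assoc]
  have hPP : X * G * Xᵀ * (X * G * Xᵀ) = X * G * Xᵀ := by
    calc X * G * Xᵀ * (X * G * Xᵀ) = X * (G * (Xᵀ * X)) * (G * Xᵀ) := by
          simp only [Matrix.mul_assoc]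
      _ = X * (G * Xᵀ) := by rw [hGl, Matrix.mul_one]
      _ = X * G * Xᵀ := by rw [Matrix.mul_assoc]
  have hMM : M * M = M := by
    rw [hM, Matrix.sub_mul, Matrix.mul_sub, Matrix.mul_sub, Matrix.one_mul,
      Matrix.one_mul, Matrix.mul_one, hPP]
    abel
  -- the matrix W and its properties
  set W := Z₂ᵀ * M * Z₂ with hW
  have hWs : Wᵀ = W := by
    rw [hW]
    simp only [transpose_mul, transpose_transpose, hMs, Matrix.mul_assoc]
  have hWr : W * W⁻¹ = 1 := mul_nonsing_inv _ hZMZ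
  have hWis : (W⁻¹)ᵀ = W⁻¹ := by rw [transpose_nonsing_inv, hWs]
  -- step 1 : LHS equals u ⬝ᵥ M u
  set s : Fin p → ℝ := (Z₂ᵀ * M * Z₀) *ᵥ δ with hs
  set γ : Fin p → ℝ := W⁻¹ *ᵥ s with hγ
  set u : Fin T → ℝ := Z₀ *ᵥ δ - Z₂ *ᵥ γ with hu
  have htr : (Z₀ᵀ * M * Z₂)ᵀ = Z₂ᵀ * M * Z₀ := by
    simp only [transpose_mul, transpose_transpose, hMs, Matrix.mul_assoc]
  have step2 : δ ⬝ᵥ ((Z₀ᵀ * M * Z₂) *ᵥ γ) = s ⬝ᵥ (W⁻¹ *ᵥ s) := by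
    rw [dp_symm, htr, ← hs, dotProduct_comm]
  have t1 : (Z₀ *ᵥ δ) ⬝ᵥ (M *ᵥ (Z₀ *ᵥ δ)) = δ ⬝ᵥ ((Z₀ᵀ * M * Z₀) *ᵥ δ) := dp_conj _ _ _ _ _
  have t2 : (Z₀ *ᵥ δ) ⬝ᵥ (M *ᵥ (Z₂ *ᵥ γ)) = s ⬝ᵥ (W⁻¹ *ᵥ s) := by
    rw [dp_conj, step2]
  have t3 : (Z₂ *ᵥ γ) ⬝ᵥ (M *ᵥ (Z₀ *ᵥ δ)) = s ⬝ᵥ (W⁻¹ *ᵥ s) := by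
    rw [dp_conj, ← hs, hγ, dotProduct_comm]
  have hWWi : ∀ x : Fin p → ℝ, W *ᵥ (W⁻¹ *ᵥ x) = x := by
    intro x
    rw [mulVec_mulVec, hWr, Matrix.one_mulVec]
  have t4 : (Z₂ *ᵥ γ) ⬝ᵥ (M *ᵥ (Z₂ *ᵥ γ)) = s ⬝ᵥ (W⁻¹ *ᵥ s) := by
    rw [dp_conj, ← hW, hγ, hWWi, dotProduct_comm]
  have hLHSexp : δ ⬝ᵥ ((Z₀ᵀ * M * Z₀ - Z₀ᵀ * M * Z₂ * W⁻¹ * (Z₂ᵀ * M * Z₀)) *ᵥ δ)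
      = δ ⬝ᵥ ((Z₀ᵀ * M * Z₀) *ᵥ δ) - s ⬝ᵥ (W⁻¹ *ᵥ s) := by
    rw [sub_mulVec, dotProduct_sub]
    congr 1
    rw [← mulVec_mulVec, ← mulVec_mulVec, ← hs, ← hγ, step2]
  have hstep1 : u ⬝ᵥ (M *ᵥ u)
      = δ ⬝ᵥ ((Z₀ᵀ * M * Z₀) *ᵥ δ) - s ⬝ᵥ (W⁻¹ *ᵥ s) := by
    rw [hu, mulVec_sub, dotProduct_sub, sub_dotProduct, sub_dotProduct, t1, t2, t3, t4]
    ring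
  -- step 2 : u ⬝ᵥ M u = v ⬝ᵥ v
  set v : Fin T → ℝ := M *ᵥ u with hv
  have hstep2 : u ⬝ᵥ (M *ᵥ u) = v ⬝ᵥ v := by
    conv_lhs => rw [← hMM, ← mulVec_mulVec, dp_symm, hMs, ← hv, dotProduct_comm]
  -- step 3 : structure of v
  set d : Fin (q + p) → ℝ := R *ᵥ δ with hd
  set b : Fin (q + p) → ℝ := G *ᵥ (Xᵀ *ᵥ u) with hb
  set c : Fin (q + p) → ℝ := R *ᵥ γ + b with hc
  have hvu : v = u - X *ᵥ b := by
    rw [hv, hM, sub_mulVec, Matrix.one_mulVec, hb, mulVec_mulVec, mulVec_mulVec,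
      Matrix.mul_assoc]
  have hZ₀δ : Z₀ *ᵥ δ = X₀ *ᵥ d := by rw [hZ₀, hd, mulVec_mulVec]
  have hZ₂γ : Z₂ *ᵥ γ = X₂ *ᵥ (R *ᵥ γ) := by rw [hZ₂, ← mulVec_mulVec]
  have hveq : v = X₀ *ᵥ (d - c) - XΔ *ᵥ c - (X - X₂) *ᵥ b := by
    rw [hvu, hu, hZ₀δ, hZ₂γ, hXΔ, hc]
    simp only [mulVec_sub, sub_mulVec, mulVec_add]
    abel
  -- orthogonality relations
  have hO1 : X₀ᵀ * XΔ = 0 := by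
    ext i j
    rw [Matrix.mul_apply, Matrix.zero_apply]
    apply Finset.sum_eq_zero
    intro k _
    rw [transpose_apply, hXΔ, Matrix.sub_apply, hX₀ k i, hX₀ k j, hX₂ k j]
    rcases le_or_gt Tb0 (k : ℕ) with h | h
    · have h2 : Tb ≤ (k : ℕ) := le_of_lt (lt_of_lt_of_le hlt h)
      simp [h, h2]
    · simp [not_le.2 h]
  have hO2 : X₀ᵀ * (X - X₂) = 0 := by
    ext i j
    rw [Matrix.mul_apply, Matrix.zero_apply]
    apply Finset.sum_eq_zero
    intro k _
    rw [transpose_apply, Matrix.sub_apply, hX₀ k i, hX₂ k j]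
    rcases le_or_gt Tb0 (k : ℕ) with h | h
    · have h2 : Tb ≤ (k : ℕ) := le_of_lt (lt_of_lt_of_le hlt h)
      simp [h, h2]
    · simp [not_le.2 h]
  have hO3 : XΔᵀ * (X - X₂) = 0 := by
    ext i j
    rw [Matrix.mul_apply, Matrix.zero_apply]
    apply Finset.sum_eq_zero
    intro k _
    rw [transpose_apply, hXΔ, Matrix.sub_apply, Matrix.sub_apply, hX₀ k i, hX₂ k i, hX₂ k j]
    rcases le_or_gt Tb (k : ℕ) with h | h
    · simp [h]
    · have h2 : ¬ Tb0 ≤ (k : ℕ) := by omega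
      simp [not_le.2 h, h2]
  have hO1' : XΔᵀ * X₀ = 0 := by
    have := congrArg Matrix.transpose hO1
    simpa [transpose_mul] using this
  have hO2' : (X - X₂)ᵀ * X₀ = 0 := by
    have := congrArg Matrix.transpose hO2
    simpa [transpose_mul] using this
  have hO3' : (X - X₂)ᵀ * XΔ = 0 := by
    have := congrArg Matrix.transpose hO3
    simpa [transpose_mul] using this
  -- Pythagoras
  set a₀ : Fin T → ℝ := X₀ *ᵥ (d - c) with ha₀
  set aΔ : Fin T → ℝ := XΔ *ᵥ c with haΔ
  set a₁ : Fin T → ℝ := (X - X₂) *ᵥ b with ha₁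
  have hpyth : v ⬝ᵥ v = a₀ ⬝ᵥ a₀ + aΔ ⬝ᵥ aΔ + a₁ ⬝ᵥ a₁ := by
    rw [hveq]
    simp only [sub_dotProduct, dotProduct_sub]
    rw [ha₀, haΔ, ha₁, dp_orth _ _ hO1, dp_orth _ _ hO2, dp_orth _ _ hO1',
      dp_orth _ _ hO3, dp_orth _ _ hO2', dp_orth _ _ hO3']
    ring
  -- sum decomposition
  have hX₂eq : X₂ = X₀ + XΔ := by rw [hXΔ]; abel
  have hsum : X₀ᵀ * X₀ + XΔᵀ * XΔ = X₂ᵀ * X₂ := by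
    rw [hX₂eq, transpose_add, Matrix.add_mul, Matrix.mul_add, Matrix.mul_add, hO1, hO1',
      add_zero, zero_add]
  -- parallel sum bound
  have hS0s : (X₀ᵀ * X₀)ᵀ = X₀ᵀ * X₀ := by rw [transpose_mul, transpose_transpose]
  have hSΔs : (XΔᵀ * XΔ)ᵀ = XΔᵀ * XΔ := by rw [transpose_mul, transpose_transpose]
  have hdet2 : IsUnit (X₀ᵀ * X₀ + XΔᵀ * XΔ).det := by rw [hsum]; exact hX₂X₂
  have hpsd2 : ∀ x : Fin (q + p) → ℝ, 0 ≤ x ⬝ᵥ ((X₀ᵀ * X₀ + XΔᵀ * XΔ) *ᵥ x) := by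
    intro x
    rw [hsum, qf_factor]
    exact dp_self_nonneg _
  have hpar := par_sum (X₀ᵀ * X₀) (XΔᵀ * XΔ) hS0s hSΔs hdet2 hpsd2 d c
  -- identify the RHS of the theorem
  have hS₂s : (X₂ᵀ * X₂)ᵀ = X₂ᵀ * X₂ := by rw [transpose_mul, transpose_transpose]
  have hS₂is : ((X₂ᵀ * X₂)⁻¹)ᵀ = (X₂ᵀ * X₂)⁻¹ := by rw [transpose_nonsing_inv, hS₂s]
  have hRHS : δ ⬝ᵥ ((Rᵀ * (XΔᵀ * XΔ) * (X₂ᵀ * X₂)⁻¹ * (X₀ᵀ * X₀) * R) *ᵥ δ)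
      = d ⬝ᵥ ((X₀ᵀ * X₀ * (X₀ᵀ * X₀ + XΔᵀ * XΔ)⁻¹ * (XΔᵀ * XΔ)) *ᵥ d) := by
    rw [hsum]
    rw [← mulVec_mulVec, ← mulVec_mulVec, ← mulVec_mulVec, ← mulVec_mulVec, ← hd]
    rw [dp_symm Rᵀ, transpose_transpose, ← hd, dotProduct_comm]
    rw [mulVec_mulVec, mulVec_mulVec]
    rw [dp_symm]
    congr 1
    simp only [transpose_mul, transpose_transpose, hS₂is, hSΔs, hS0s, Matrix.mul_assoc]
  -- assemble everything
  have hLHS2 : δ ⬝ᵥ ((Z₀ᵀ * M * Z₀ - Z₀ᵀ * M * Z₂ * W⁻¹ * (Z₂ᵀ * M * Z₀)) *ᵥ δ)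
      = a₀ ⬝ᵥ a₀ + aΔ ⬝ᵥ aΔ + a₁ ⬝ᵥ a₁ := by
    rw [hLHSexp, ← hstep1, hstep2, hpyth]
  have hq0 : a₀ ⬝ᵥ a₀ = (d - c) ⬝ᵥ ((X₀ᵀ * X₀) *ᵥ (d - c)) := (qf_factor X₀ (d - c)).symm
  have hqΔ : aΔ ⬝ᵥ aΔ = c ⬝ᵥ ((XΔᵀ * XΔ) *ᵥ c) := (qf_factor XΔ c).symm
  have hq1 : 0 ≤ a₁ ⬝ᵥ a₁ := dp_self_nonneg _
  rw [ge_iff_le, hRHS, hLHS2]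
  rw [hq0, hqΔ]
  linarith [hpar, hq1]
end

section
/- Suppose T_b > T_b⁰ and that X'X − X₂'X₂ and Z₂'MZ₂ are invertible. Then for every δ ∈ ℝ^p one has δ'[Z₀'MZ₀ − (Z₀'MZ₂)(Z₂'MZ₂)⁻¹(Z₂'MZ₀)]δ ≥ δ'[R'(X_Δ'X_Δ)(X'X − X₂'X₂)⁻¹(X'X − X₀'X₀)R]δ. -/
open Matrix

private lemma dot_self_nonneg' {n : Type*} [Fintype n] (v : n → ℝ) : 0 ≤ v ⬝ᵥ v :=
  Finset.sum_nonneg fun _ _ => mul_self_nonneg _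

private lemma quad_form_eq {n m : Type*} [Fintype n] [Fintype m]
    (D : Matrix n m ℝ) (E : Matrix n n ℝ) (x : m → ℝ) :
    x ⬝ᵥ ((Dᵀ * E * D) *ᵥ x) = (D *ᵥ x) ⬝ᵥ (E *ᵥ (D *ᵥ x)) := by
  rw [← Matrix.mulVec_mulVec, ← Matrix.mulVec_mulVec, Matrix.dotProduct_mulVec,
    Matrix.vecMul_transpose]

private lemma quad_sq_eq {n m : Type*} [Fintype n] [Fintype m]
    (D : Matrix n m ℝ) (x : m → ℝ) :
    x ⬝ᵥ ((Dᵀ * D) *ᵥ x) = (D *ᵥ x) ⬝ᵥ (D *ᵥ x) := by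
  rw [← Matrix.mulVec_mulVec, Matrix.dotProduct_mulVec, Matrix.vecMul_transpose]

/-- Lemma A.1 of Bai (1997), case `T_b > T_b⁰` (eq. (37) in the paper). -/
theorem statement1
    (T q p : ℕ) (hT : 0 < T) (hq : 0 < q) (hp : 0 < p)
    (Tb Tb0 : ℕ) (hTbpos : 0 < Tb) (hTbT : Tb < T) (hTb0pos : 0 < Tb0) (hTb0T : Tb0 < T)
    (hgt : Tb0 < Tb)
    (X X₂ X₀ XΔ : Matrix (Fin T) (Fin (q + p)) ℝ)
    (hX₂ : ∀ i j, X₂ i j = if Tb ≤ (i : ℕ) then X i j else 0)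
    (hX₀ : ∀ i j, X₀ i j = if Tb0 ≤ (i : ℕ) then X i j else 0)
    (hXΔ : XΔ = X₀ - X₂)
    (R : Matrix (Fin (q + p)) (Fin p) ℝ) (hR : R.rank = p)
    (Z₂ Z₀ : Matrix (Fin T) (Fin p) ℝ)
    (hZ₂ : Z₂ = X₂ * R) (hZ₀ : Z₀ = X₀ * R)
    (hXX : IsUnit (Xᵀ * X).det)
    (M : Matrix (Fin T) (Fin T) ℝ)
    (hM : M = 1 - X * (Xᵀ * X)⁻¹ * Xᵀ)
    (hdiff : IsUnit (Xᵀ * X - X₂ᵀ * X₂).det)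
    (hZMZ : IsUnit (Z₂ᵀ * M * Z₂).det) :
    ∀ δ : Fin p → ℝ,
      δ ⬝ᵥ ((Z₀ᵀ * M * Z₀ - (Z₀ᵀ * M * Z₂) * (Z₂ᵀ * M * Z₂)⁻¹ * (Z₂ᵀ * M * Z₀)) *ᵥ δ)
        ≥ δ ⬝ᵥ ((Rᵀ * (XΔᵀ * XΔ) * (Xᵀ * X - X₂ᵀ * X₂)⁻¹ * (Xᵀ * X - X₀ᵀ * X₀) * R) *ᵥ δ) := by
  intro δ
  have hX0eq : X₀ = X₂ + XΔ := by rw [hXΔ]; abel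
  -- entrywise facts
  have hΔent : ∀ k l, XΔ k l = if Tb0 ≤ (k : ℕ) ∧ ¬ Tb ≤ (k : ℕ) then X k l else 0 := by
    intro k l
    rw [hXΔ]
    simp only [Matrix.sub_apply, hX₀, hX₂]
    by_cases hkb : Tb ≤ (k : ℕ)
    · have hk0 : Tb0 ≤ (k : ℕ) := le_trans (le_of_lt hgt) hkb
      simp [hkb, hk0]
    · by_cases hk0 : Tb0 ≤ (k : ℕ) <;> simp [hkb, hk0]
  have hc : Xᵀ * X₂ = X₂ᵀ * X₂ := by
    ext i j
    simp only [Matrix.mul_apply, Matrix.transpose_apply]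
    refine Finset.sum_congr rfl fun k _ => ?_
    rw [hX₂ k i, hX₂ k j]
    split_ifs with h
    · rfl
    · ring
  have hb : Xᵀ * XΔ = XΔᵀ * XΔ := by
    ext i j
    simp only [Matrix.mul_apply, Matrix.transpose_apply]
    refine Finset.sum_congr rfl fun k _ => ?_
    rw [hΔent k i, hΔent k j]
    split_ifs with h
    · rfl
    · ring
  have ha : X₂ᵀ * XΔ = 0 := by
    ext i j
    simp only [Matrix.mul_apply, Matrix.transpose_apply, Matrix.zero_apply]
    refine Finset.sum_eq_zero fun k _ => ?_
    rw [hX₂ k i, hΔent k j]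
    by_cases hkb : Tb ≤ (k : ℕ)
    · simp [hkb]
    · simp [hkb]
  have hct : X₂ᵀ * X = X₂ᵀ * X₂ := by
    have h := congrArg Matrix.transpose hc
    simp only [Matrix.transpose_mul, Matrix.transpose_transpose] at h
    exact h
  have hbt : XΔᵀ * X = XΔᵀ * XΔ := by
    have h := congrArg Matrix.transpose hb
    simp only [Matrix.transpose_mul, Matrix.transpose_transpose] at h
    exact h
  have hat : XΔᵀ * X₂ = 0 := by
    have h := congrArg Matrix.transpose ha
    simp only [Matrix.transpose_mul, Matrix.transpose_transpose, Matrix.transpose_zero] at h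
    exact h
  have hA₀sum : X₀ᵀ * X₀ = X₂ᵀ * X₂ + XΔᵀ * XΔ := by
    rw [hX0eq, Matrix.transpose_add, Matrix.add_mul, Matrix.mul_add, Matrix.mul_add, ha, hat]
    abel
  have hB1 : Xᵀ * X - X₂ᵀ * X₂ = (X - X₂)ᵀ * (X - X₂) := by
    rw [Matrix.transpose_sub, Matrix.sub_mul, Matrix.mul_sub, Matrix.mul_sub, hc, hct]
    abel
  -- abbreviations
  set G := Xᵀ * X with hGdef
  set A₂ := X₂ᵀ * X₂ with hA₂def
  set AΔ := XΔᵀ * XΔ with hAΔdef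
  set A₀ := X₀ᵀ * X₀ with hA₀def
  set Gi := G⁻¹ with hGidef
  set B := G - A₂ with hBdef
  set Bi := B⁻¹ with hBidef
  set S := Bi - Gi with hSdef
  set ZΔ := XΔ * R with hZΔdef
  set N := Z₂ᵀ * M * Z₂ with hNdef
  set Ni := N⁻¹ with hNidef
  -- inverse facts
  have hGG : G * Gi = 1 := Matrix.mul_nonsing_inv G hXX
  have hGiG : Gi * G = 1 := Matrix.nonsing_inv_mul G hXX
  have hBB : B * Bi = 1 := Matrix.mul_nonsing_inv B hdiff
  have hBiB : Bi * B = 1 := Matrix.nonsing_inv_mul B hdiff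
  have hNN : N * Ni = 1 := Matrix.mul_nonsing_inv N hZMZ
  have hNiN : Ni * N = 1 := Matrix.nonsing_inv_mul N hZMZ
  -- symmetry facts
  have hGsym : Gᵀ = G := by rw [hGdef, Matrix.transpose_mul, Matrix.transpose_transpose]
  have hA₂sym : A₂ᵀ = A₂ := by rw [hA₂def, Matrix.transpose_mul, Matrix.transpose_transpose]
  have hAΔsym : AΔᵀ = AΔ := by rw [hAΔdef, Matrix.transpose_mul, Matrix.transpose_transpose]
  have hGisym : Giᵀ = Gi := by rw [hGidef, Matrix.transpose_nonsing_inv, hGsym]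
  have hBsym : Bᵀ = B := by rw [hBdef, Matrix.transpose_sub, hGsym, hA₂sym]
  have hBisym : Biᵀ = Bi := by rw [hBidef, Matrix.transpose_nonsing_inv, hBsym]
  have hSsym : Sᵀ = S := by rw [hSdef, Matrix.transpose_sub, hBisym, hGisym]
  have hMsym : Mᵀ = M := by
    rw [hM]
    simp [Matrix.transpose_sub, Matrix.transpose_mul, hGisym, Matrix.mul_assoc]
  have hNsym : Nᵀ = N := by
    rw [hNdef, Matrix.transpose_mul, Matrix.transpose_mul, Matrix.transpose_transpose, hMsym,
      Matrix.mul_assoc]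
  have hNisym : Niᵀ = Ni := by rw [hNidef, Matrix.transpose_nonsing_inv, hNsym]
  -- algebraic identities for S
  have hSB : S * B = Gi * A₂ := by
    rw [hSdef, Matrix.sub_mul, hBiB, hBdef, Matrix.mul_sub, hGiG]
    abel
  have hBS : B * S = A₂ * Gi := by
    rw [hSdef, Matrix.mul_sub, hBB, hBdef, Matrix.sub_mul, hGG]
    abel
  have hBSB : B * S * B = A₂ - A₂ * Gi * A₂ := by
    rw [hBS, hBdef, Matrix.mul_sub, Matrix.mul_assoc A₂ Gi G, hGiG, Matrix.mul_one]
  have hA₂GB : A₂ = G - B := by rw [hBdef]; abel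
  have hGAB : Gi * A₂ * Bi = S := by
    rw [hA₂GB, Matrix.mul_sub, hGiG, Matrix.sub_mul, Matrix.one_mul, Matrix.mul_assoc, hBB,
      Matrix.mul_one, hSdef]
  have hBAG : Bi * A₂ * Gi = S := by
    rw [hA₂GB, Matrix.mul_sub, hBiB, Matrix.sub_mul, Matrix.one_mul, Matrix.mul_assoc, hGG,
      Matrix.mul_one, hSdef]
  have hBiGiS : Bi = Gi + S := by rw [hSdef]; abel
  have hSdecomp : S = Gi * A₂ * Gi + Gi * A₂ * Bi * A₂ * Gi := by
    calc S = Gi * A₂ * Bi := hGAB.symm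
    _ = Gi * A₂ * (Gi + S) := by rw [← hBiGiS]
    _ = Gi * A₂ * Gi + Gi * A₂ * S := by rw [Matrix.mul_add]
    _ = Gi * A₂ * Gi + Gi * A₂ * Bi * A₂ * Gi := by
        rw [← hBAG]; simp only [Matrix.mul_assoc]
  -- expansion helpers
  have hexpand : ∀ Y W : Matrix (Fin T) (Fin (q + p)) ℝ,
      Yᵀ * M * W = Yᵀ * W - Yᵀ * X * Gi * (Xᵀ * W) := by
    intro Y W
    rw [hM]
    simp only [Matrix.mul_sub, Matrix.sub_mul, Matrix.mul_one, Matrix.one_mul, Matrix.mul_assoc]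
  have hconj : ∀ Y W : Matrix (Fin T) (Fin (q + p)) ℝ,
      (Y * R)ᵀ * M * (W * R) = Rᵀ * (Yᵀ * M * W) * R := by
    intro Y W
    rw [Matrix.transpose_mul]
    simp only [Matrix.mul_assoc]
  have hZ₂M : N = Rᵀ * (A₂ - A₂ * Gi * A₂) * R := by
    rw [hNdef, hZ₂, hconj, hexpand, hct, hc, ← hA₂def]
  have hZΔMZΔ : ZΔᵀ * M * ZΔ = Rᵀ * (AΔ - AΔ * Gi * AΔ) * R := by
    rw [hZΔdef, hconj, hexpand, hbt, hb, ← hAΔdef]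
  have hZΔMZ₂ : ZΔᵀ * M * Z₂ = -(Rᵀ * (AΔ * Gi * A₂) * R) := by
    rw [hZ₂, hZΔdef, hconj, hexpand, hat, hbt, hc]
    simp [Matrix.mul_neg, Matrix.neg_mul, zero_sub]
  have hZ₂MZΔ : Z₂ᵀ * M * ZΔ = -(Rᵀ * (A₂ * Gi * AΔ) * R) := by
    rw [hZ₂, hZΔdef, hconj, hexpand, ha, hct, hb]
    simp [Matrix.mul_neg, Matrix.neg_mul, zero_sub]
  have hZ0 : Z₀ = Z₂ + ZΔ := by rw [hZ₀, hX0eq, Matrix.add_mul, ← hZ₂, ← hZΔdef]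
  -- reduce the LHS matrix
  have key1 : Z₀ᵀ * M * Z₀ - Z₀ᵀ * M * Z₂ * Ni * (Z₂ᵀ * M * Z₀)
      = ZΔᵀ * M * ZΔ - ZΔᵀ * M * Z₂ * Ni * (Z₂ᵀ * M * ZΔ) := by
    rw [hZ0]
    have e1 : (Z₂ + ZΔ)ᵀ * M * (Z₂ + ZΔ)
        = N + Z₂ᵀ * M * ZΔ + ZΔᵀ * M * Z₂ + ZΔᵀ * M * ZΔ := by
      rw [Matrix.transpose_add]
      simp only [Matrix.add_mul, Matrix.mul_add, ← hNdef]
      abel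
    have e2 : (Z₂ + ZΔ)ᵀ * M * Z₂ = N + ZΔᵀ * M * Z₂ := by
      rw [Matrix.transpose_add]
      simp only [Matrix.add_mul, ← hNdef]
    have e3 : Z₂ᵀ * M * (Z₂ + ZΔ) = N + Z₂ᵀ * M * ZΔ := by
      simp only [Matrix.mul_add, ← hNdef]
    rw [e1, e2, e3]
    have e4 : (N + ZΔᵀ * M * Z₂) * Ni * (N + Z₂ᵀ * M * ZΔ)
        = N + Z₂ᵀ * M * ZΔ + ZΔᵀ * M * Z₂ + ZΔᵀ * M * Z₂ * Ni * (Z₂ᵀ * M * ZΔ) := by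
      rw [Matrix.add_mul, hNN, Matrix.add_mul, Matrix.one_mul, Matrix.mul_add,
        Matrix.mul_assoc (ZΔᵀ * M * Z₂) Ni N, hNiN, Matrix.mul_one, Matrix.mul_assoc]
      abel
    rw [e4]
    abel
  have key2 : ZΔᵀ * M * ZΔ - ZΔᵀ * M * Z₂ * Ni * (Z₂ᵀ * M * ZΔ)
      = Rᵀ * (AΔ - AΔ * Gi * AΔ) * R
        - Rᵀ * (AΔ * Gi * A₂) * R * Ni * (Rᵀ * (A₂ * Gi * AΔ) * R) := by
    rw [hZΔMZΔ, hZΔMZ₂, hZ₂MZΔ]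
    simp [Matrix.neg_mul, Matrix.mul_neg]
  -- reduce the RHS matrix
  have key3 : Rᵀ * AΔ * Bi * (G - A₀) * R = Rᵀ * (AΔ - AΔ * Bi * AΔ) * R := by
    have hGA₀ : G - A₀ = B - AΔ := by rw [hA₀sum, hBdef]; abel
    rw [hGA₀, Matrix.mul_sub, Matrix.mul_assoc (Rᵀ * AΔ) Bi B, hBiB, Matrix.mul_one]
    simp only [Matrix.sub_mul, Matrix.mul_sub, Matrix.mul_assoc]
  -- the key positive-semidefinite identity
  set Q := Rᵀ * (A₂ * Gi * AΔ) * R with hQdef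
  set Qt := Rᵀ * (AΔ * Gi * A₂) * R with hQtdef
  have hQtQ : Qᵀ = Qt := by
    rw [hQdef, hQtdef]
    simp only [Matrix.transpose_mul, Matrix.transpose_transpose, hA₂sym, hAΔsym, hGisym,
      Matrix.mul_assoc]
  set C := AΔ * R - B * R * Ni * Q with hCdef
  have hRBSB : Rᵀ * (B * (S * (B * R))) = N := by
    rw [hZ₂M, ← hBSB]
    simp only [Matrix.mul_assoc]
  have hkey : Rᵀ * (AΔ - AΔ * Gi * AΔ) * R - Qt * Ni * Q
        - Rᵀ * (AΔ - AΔ * Bi * AΔ) * R = Cᵀ * S * C := by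
    have hCt : Cᵀ = Rᵀ * AΔ - Qt * Ni * (Rᵀ * B) := by
      rw [hCdef]
      simp only [Matrix.transpose_sub, Matrix.transpose_mul, Matrix.transpose_transpose,
        hAΔsym, hBsym, hNisym, hQtQ, Matrix.mul_assoc]
    rw [hCt, hCdef]
    have hSBc : ∀ Y : Matrix (Fin (q + p)) (Fin p) ℝ, S * (B * Y) = Gi * (A₂ * Y) := by
      intro Y; rw [← Matrix.mul_assoc, hSB, Matrix.mul_assoc]
    have hBSc : ∀ Y : Matrix (Fin (q + p)) (Fin p) ℝ, B * (S * Y) = A₂ * (Gi * Y) := by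
      intro Y; rw [← Matrix.mul_assoc, hBS, Matrix.mul_assoc]
    -- expand everything
    have hBGA : Rᵀ * (B * (Gi * (A₂ * (R * (Ni * Q))))) = N * (Ni * Q) := by
      have e : B * (Gi * A₂) = A₂ - A₂ * Gi * A₂ := by
        rw [hBdef, Matrix.sub_mul, ← Matrix.mul_assoc, hGG, Matrix.one_mul, ← Matrix.mul_assoc]
      calc Rᵀ * (B * (Gi * (A₂ * (R * (Ni * Q))))) = Rᵀ * (B * (Gi * A₂)) * (R * (Ni * Q)) := by
            simp only [Matrix.mul_assoc]
      _ = Rᵀ * (A₂ - A₂ * Gi * A₂) * (R * (Ni * Q)) := by rw [e]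
      _ = Rᵀ * (A₂ - A₂ * Gi * A₂) * R * (Ni * Q) := by simp only [Matrix.mul_assoc]
      _ = N * (Ni * Q) := by rw [← hZ₂M]
    have hQfold : Rᵀ * (A₂ * (Gi * (AΔ * R))) = Q := by
      rw [hQdef]; simp only [Matrix.mul_assoc]
    have hQtfold : Rᵀ * (AΔ * (Gi * (A₂ * (R * (Ni * Q))))) = Qt * (Ni * Q) := by
      rw [hQtdef]; simp only [Matrix.mul_assoc]
    have hNNiQ : N * (Ni * Q) = Q := by rw [← Matrix.mul_assoc, hNN, Matrix.one_mul]
    simp only [Matrix.mul_sub, Matrix.sub_mul, Matrix.mul_assoc]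
    rw [hSBc, hBSc, hQfold, hQtfold, hBGA, hNNiQ]
    rw [hSdef]
    simp only [Matrix.sub_mul, Matrix.mul_sub, Matrix.mul_assoc]
    abel
  -- positive semidefiniteness of S
  have hSpsd : ∀ x : Fin (q + p) → ℝ, 0 ≤ x ⬝ᵥ (S *ᵥ x) := by
    intro x
    have t1 : Gi * A₂ * Gi = (X₂ * Gi)ᵀ * (X₂ * Gi) := by
      rw [hA₂def]
      simp only [Matrix.transpose_mul, hGisym, Matrix.mul_assoc]
    have t2 : Gi * A₂ * Bi * A₂ * Gi = (A₂ * Gi)ᵀ * Bi * (A₂ * Gi) := by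
      simp only [Matrix.transpose_mul, hGisym, hA₂sym, Matrix.mul_assoc]
    rw [hSdecomp, Matrix.add_mulVec, dotProduct_add, t1, t2, quad_sq_eq, quad_form_eq]
    have h1 := dot_self_nonneg' ((X₂ * Gi) *ᵥ x)
    have h2 : 0 ≤ ((A₂ * Gi) *ᵥ x) ⬝ᵥ (Bi *ᵥ ((A₂ * Gi) *ᵥ x)) := by
      set z := (A₂ * Gi) *ᵥ x with hzdef
      have hz : B *ᵥ (Bi *ᵥ z) = z := by
        rw [Matrix.mulVec_mulVec, hBB, Matrix.one_mulVec]
      calc (0:ℝ) ≤ ((X - X₂) *ᵥ (Bi *ᵥ z)) ⬝ᵥ ((X - X₂) *ᵥ (Bi *ᵥ z)) :=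
            dot_self_nonneg' _
      _ = (Bi *ᵥ z) ⬝ᵥ (((X - X₂)ᵀ * (X - X₂)) *ᵥ (Bi *ᵥ z)) := (quad_sq_eq _ _).symm
      _ = (Bi *ᵥ z) ⬝ᵥ (B *ᵥ (Bi *ᵥ z)) := by rw [← hB1]
      _ = (Bi *ᵥ z) ⬝ᵥ z := by rw [hz]
      _ = z ⬝ᵥ (Bi *ᵥ z) := dotProduct_comm _ _
    linarith
  -- assemble
  have hmats : Z₀ᵀ * M * Z₀ - Z₀ᵀ * M * Z₂ * Ni * (Z₂ᵀ * M * Z₀)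
      - Rᵀ * AΔ * Bi * (G - A₀) * R = Cᵀ * S * C := by
    rw [key1, key2, key3]
    exact hkey
  rw [ge_iff_le, ← sub_nonneg, ← dotProduct_sub, ← Matrix.sub_mulVec, hmats]
  rw [quad_form_eq]
  exact hSpsd (C *ᵥ δ)
end

section
/- Suppose Z₂'MZ₂ and Z₀'MZ₀ are invertible. Then Q_T(T_b) − Q_T(T_b⁰) = δ⁰'[(Z₀'MZ₂)(Z₂'MZ₂)⁻¹(Z₂'MZ₀) − Z₀'MZ₀]δ⁰ + g_e(T_b), where g_e(T_b) := 2δ⁰'(Z₀'MZ₂)(Z₂'MZ₂)⁻¹Z₂'Me − 2δ⁰'Z₀'Me + e'MZ₂(Z₂'MZ₂)⁻¹Z₂'Me − e'MZ₀(Z₀'MZ₀)⁻¹Z₀'Me. -/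
open Matrix

lemma ds {m n : Type*} [Fintype m] [Fintype n]
    (A : Matrix m n ℝ) (u : m → ℝ) (v : n → ℝ) :
    u ⬝ᵥ (A *ᵥ v) = (Aᵀ *ᵥ u) ⬝ᵥ v := by
  rw [Matrix.dotProduct_mulVec, ← Matrix.mulVec_transpose]

lemma dd {m n k : Type*} [Fintype m] [Fintype n] [Fintype k]
    (P : Matrix m n ℝ) (Q : Matrix m k ℝ) (u : n → ℝ) (v : k → ℝ) :
    (P *ᵥ u) ⬝ᵥ (Q *ᵥ v) = u ⬝ᵥ ((Pᵀ * Q) *ᵥ v) := by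
  rw [ds, Matrix.mulVec_mulVec, dotProduct_comm, ds,
    Matrix.transpose_mul, Matrix.transpose_transpose, dotProduct_comm]

/-- Decomposition of the centered least-squares criterion
`Q_T(T_b) − Q_T(T_b⁰)` into a quadratic-form part in `δ⁰` and
a stochastic part `g_e(T_b)` (eqs. (A.2.0)–(A.2.4) of the paper). -/
theorem statement3
    (T q p : ℕ) (hT : 0 < T) (hq : 0 < q) (hp : 0 < p)
    (Tb Tb0 : ℕ) (hTbpos : 0 < Tb) (hTbT : Tb < T) (hTb0pos : 0 < Tb0) (hTb0T : Tb0 < T)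
    (X X₂ X₀ : Matrix (Fin T) (Fin (q + p)) ℝ)
    (hX₂ : ∀ i j, X₂ i j = if Tb ≤ (i : ℕ) then X i j else 0)
    (hX₀ : ∀ i j, X₀ i j = if Tb0 ≤ (i : ℕ) then X i j else 0)
    (R : Matrix (Fin (q + p)) (Fin p) ℝ) (hR : R.rank = p)
    (Z₂ Z₀ : Matrix (Fin T) (Fin p) ℝ)
    (hZ₂ : Z₂ = X₂ * R) (hZ₀ : Z₀ = X₀ * R)
    (hXX : IsUnit (Xᵀ * X).det)
    (M : Matrix (Fin T) (Fin T) ℝ)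
    (hM : M = 1 - X * (Xᵀ * X)⁻¹ * Xᵀ)
    (β₀ : Fin (q + p) → ℝ) (δ₀ : Fin p → ℝ) (e Y : Fin T → ℝ)
    (hY : Y = X *ᵥ β₀ + Z₀ *ᵥ δ₀ + e)
    (hZ₂inv : IsUnit (Z₂ᵀ * M * Z₂).det)
    (hZ₀inv : IsUnit (Z₀ᵀ * M * Z₀).det)
    (δhat₂ δhat₀ : Fin p → ℝ)
    (hδhat₂ : δhat₂ = ((Z₂ᵀ * M * Z₂)⁻¹ * (Z₂ᵀ * M)) *ᵥ Y)
    (hδhat₀ : δhat₀ = ((Z₀ᵀ * M * Z₀)⁻¹ * (Z₀ᵀ * M)) *ᵥ Y)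
    (QTb QTb0 : ℝ)
    (hQTb : QTb = δhat₂ ⬝ᵥ ((Z₂ᵀ * M * Z₂) *ᵥ δhat₂))
    (hQTb0 : QTb0 = δhat₀ ⬝ᵥ ((Z₀ᵀ * M * Z₀) *ᵥ δhat₀)) :
    QTb - QTb0 =
      δ₀ ⬝ᵥ (((Z₀ᵀ * M * Z₂) * (Z₂ᵀ * M * Z₂)⁻¹ * (Z₂ᵀ * M * Z₀) - Z₀ᵀ * M * Z₀) *ᵥ δ₀)
        + (2 * (δ₀ ⬝ᵥ (((Z₀ᵀ * M * Z₂) * (Z₂ᵀ * M * Z₂)⁻¹ * (Z₂ᵀ * M)) *ᵥ e))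
            - 2 * (δ₀ ⬝ᵥ ((Z₀ᵀ * M) *ᵥ e))
            + e ⬝ᵥ ((M * Z₂ * (Z₂ᵀ * M * Z₂)⁻¹ * (Z₂ᵀ * M)) *ᵥ e)
            - e ⬝ᵥ ((M * Z₀ * (Z₀ᵀ * M * Z₀)⁻¹ * (Z₀ᵀ * M)) *ᵥ e)) := by
  -- basic facts about M
  have hXM : Xᵀ * M = 0 := by
    rw [hM, Matrix.mul_sub, Matrix.mul_one]
    have h : Xᵀ * (X * (Xᵀ * X)⁻¹ * Xᵀ) = Xᵀ := by
      simp only [← Matrix.mul_assoc]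
      rw [Matrix.mul_nonsing_inv _ hXX, Matrix.one_mul]
    rw [h, sub_self]
  have hMT : Mᵀ = M := by
    rw [hM]
    simp [Matrix.transpose_sub, Matrix.transpose_mul, Matrix.transpose_nonsing_inv,
      Matrix.transpose_transpose, Matrix.transpose_one, Matrix.mul_assoc]
  have hMX : M * X = 0 := by
    have h := congrArg Matrix.transpose hXM
    simpa [Matrix.transpose_mul, hMT] using h
  set G : Matrix (Fin p) (Fin p) ℝ := (Z₂ᵀ * M * Z₂)⁻¹ with hG
  set G₀ : Matrix (Fin p) (Fin p) ℝ := (Z₀ᵀ * M * Z₀)⁻¹ with hG₀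
  have hGT : Gᵀ = G := by
    rw [hG, Matrix.transpose_nonsing_inv]
    congr 1
    simp [Matrix.transpose_mul, hMT, Matrix.mul_assoc]
  have hG₀T : G₀ᵀ = G₀ := by
    rw [hG₀, Matrix.transpose_nonsing_inv]
    congr 1
    simp [Matrix.transpose_mul, hMT, Matrix.mul_assoc]
  set P₂ : Matrix (Fin T) (Fin T) ℝ := M * Z₂ * G * (Z₂ᵀ * M) with hP₂
  set P₀ : Matrix (Fin T) (Fin T) ℝ := M * Z₀ * G₀ * (Z₀ᵀ * M) with hP₀
  have hP₂T : P₂ᵀ = P₂ := by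
    rw [hP₂]
    simp [Matrix.transpose_mul, hMT, hGT, Matrix.mul_assoc]
  have hP₀T : P₀ᵀ = P₀ := by
    rw [hP₀]
    simp [Matrix.transpose_mul, hMT, hG₀T, Matrix.mul_assoc]
  have hP₂X : P₂ * X = 0 := by
    rw [hP₂]
    simp only [Matrix.mul_assoc]
    rw [hMX]
    simp
  have hP₀X : P₀ * X = 0 := by
    rw [hP₀]
    simp only [Matrix.mul_assoc]
    rw [hMX]
    simp
  -- Q as a quadratic form in Y
  have hQ2 : QTb = Y ⬝ᵥ (P₂ *ᵥ Y) := by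
    have hc : (G * (Z₂ᵀ * M))ᵀ * ((Z₂ᵀ * M * Z₂) * (G * (Z₂ᵀ * M))) = P₂ := by
      rw [show (Z₂ᵀ * M * Z₂) * (G * (Z₂ᵀ * M)) = Z₂ᵀ * M from by
        rw [← Matrix.mul_assoc, Matrix.mul_nonsing_inv _ hZ₂inv, Matrix.one_mul]]
      rw [Matrix.transpose_mul, hGT, Matrix.transpose_mul, Matrix.transpose_transpose, hMT]
    rw [hQTb, hδhat₂, Matrix.mulVec_mulVec, dd, hc]
  have hQ0 : QTb0 = Y ⬝ᵥ (P₀ *ᵥ Y) := by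
    have hc : (G₀ * (Z₀ᵀ * M))ᵀ * ((Z₀ᵀ * M * Z₀) * (G₀ * (Z₀ᵀ * M))) = P₀ := by
      rw [show (Z₀ᵀ * M * Z₀) * (G₀ * (Z₀ᵀ * M)) = Z₀ᵀ * M from by
        rw [← Matrix.mul_assoc, Matrix.mul_nonsing_inv _ hZ₀inv, Matrix.one_mul]]
      rw [Matrix.transpose_mul, hG₀T, Matrix.transpose_mul, Matrix.transpose_transpose, hMT]
    rw [hQTb0, hδhat₀, Matrix.mulVec_mulVec, dd, hc]
  -- expansion of a symmetric quadratic form annihilating X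
  have key : ∀ N : Matrix (Fin T) (Fin T) ℝ, Nᵀ = N → N * X = 0 →
      Y ⬝ᵥ (N *ᵥ Y) = δ₀ ⬝ᵥ ((Z₀ᵀ * (N * Z₀)) *ᵥ δ₀)
        + 2 * (δ₀ ⬝ᵥ ((Z₀ᵀ * N) *ᵥ e)) + e ⬝ᵥ (N *ᵥ e) := by
    intro N hNT hNX
    have hXN : Xᵀ * N = 0 := by
      have h := congrArg Matrix.transpose hNX
      simpa [Matrix.transpose_mul, hNT] using h
    rw [hY]
    simp only [Matrix.mulVec_add, dotProduct_add, add_dotProduct,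
      Matrix.mulVec_mulVec]
    rw [hNX]
    simp only [Matrix.zero_mulVec, dotProduct_zero]
    rw [dd X (N * Z₀) β₀ δ₀, dd X N β₀ e, dd Z₀ (N * Z₀) δ₀ δ₀, dd Z₀ N δ₀ e,
      ds (N * Z₀) e δ₀]
    rw [show Xᵀ * (N * Z₀) = 0 from by rw [← Matrix.mul_assoc, hXN, Matrix.zero_mul], hXN]
    simp only [Matrix.zero_mulVec, dotProduct_zero]
    rw [Matrix.transpose_mul, hNT, dotProduct_comm ((Z₀ᵀ * N) *ᵥ e) δ₀]
    ring
  -- assemble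
  rw [hQ2, hQ0, key P₂ hP₂T hP₂X, key P₀ hP₀T hP₀X]
  have e1 : Z₀ᵀ * (P₂ * Z₀) = (Z₀ᵀ * M * Z₂) * G * (Z₂ᵀ * (M * Z₀)) := by
    rw [hP₂]; simp only [Matrix.mul_assoc]
  have e2 : Z₀ᵀ * P₂ = (Z₀ᵀ * M * Z₂) * G * (Z₂ᵀ * M) := by
    rw [hP₂]; simp only [Matrix.mul_assoc]
  have e3 : Z₀ᵀ * (P₀ * Z₀) = Z₀ᵀ * M * Z₀ := by
    rw [hP₀]
    rw [show Z₀ᵀ * (M * Z₀ * G₀ * (Z₀ᵀ * M) * Z₀) = (Z₀ᵀ * M * Z₀) * (G₀ * (Z₀ᵀ * M * Z₀))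
      from by simp only [Matrix.mul_assoc]]
    rw [hG₀, Matrix.nonsing_inv_mul _ hZ₀inv, Matrix.mul_one]
  have e4 : Z₀ᵀ * P₀ = Z₀ᵀ * M := by
    rw [hP₀]
    rw [show Z₀ᵀ * (M * Z₀ * G₀ * (Z₀ᵀ * M)) = ((Z₀ᵀ * M * Z₀) * G₀) * (Z₀ᵀ * M)
      from by simp only [Matrix.mul_assoc]]
    rw [hG₀, Matrix.mul_nonsing_inv _ hZ₀inv, Matrix.one_mul]
  rw [e1, e2, e3, e4, Matrix.sub_mulVec, dotProduct_sub]
  rw [show Z₂ᵀ * (M * Z₀) = Z₂ᵀ * M * Z₀ from (Matrix.mul_assoc _ _ _).symm]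
  ring
end

section
/- Assume the decomposition Q_t(ω) − Q_{T_b⁰}(ω) = −|t − T_b⁰|·r_t(ω) + g_t(ω) holds for all t ∈ S and ω ∈ Ω. Then for any real numbers m > 0 and c ≥ 0 such that, almost surely, r_t ≥ c for every t ∈ S with |t − T_b⁰| > m, one has P(|T̂ − T_b⁰| > m) ≤ P(max_{t∈S} |g_t| ≥ m·c). -/
open MeasureTheory

/-- If the criterion decomposes as
`Q_t − Q_{T_b⁰} = −|t − T_b⁰|·r_t + g_t` on `S`, and almost surely `r_t ≥ c`
for every `t ∈ S` with `|t − T_b⁰| > m`, then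
`P(|T̂ − T_b⁰| > m) ≤ P(max_{t∈S} |g_t| ≥ m·c)`. -/
theorem statement6
    {Ω : Type*} [MeasurableSpace Ω] (μ : Measure Ω) [IsProbabilityMeasure μ]
    (S : Finset ℤ) (hS : S.Nonempty) (Tb0 : ℤ) (hTb0 : Tb0 ∈ S)
    (Q r g : ℤ → Ω → ℝ)
    (That : Ω → ℤ) (hThatS : ∀ ω, That ω ∈ S)
    (hargmax : ∀ ω, ∀ t ∈ S, Q t ω ≤ Q (That ω) ω)
    (hdecomp : ∀ t ∈ S, ∀ ω, Q t ω - Q Tb0 ω = -|(t : ℝ) - (Tb0 : ℝ)| * r t ω + g t ω)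
    (m c : ℝ) (hm : 0 < m) (hc : 0 ≤ c)
    (hr : ∀ᵐ ω ∂μ, ∀ t ∈ S, m < |(t : ℝ) - (Tb0 : ℝ)| → c ≤ r t ω) :
    μ {ω | m < |(That ω : ℝ) - (Tb0 : ℝ)|}
      ≤ μ {ω | m * c ≤ S.sup' hS fun t => |g t ω|} := by
  refine measure_mono_ae ?_
  filter_upwards [hr] with ω hrω hω
  have h1 := hargmax ω Tb0 hTb0
  have h2 := hdecomp (That ω) (hThatS ω) ω
  have hrc := hrω (That ω) (hThatS ω) hω
  have hmc : m * c ≤ |(That ω : ℝ) - Tb0| * r (That ω) ω :=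
    mul_le_mul hω.le hrc hc (abs_nonneg _)
  have hg : |(That ω : ℝ) - Tb0| * r (That ω) ω ≤ g (That ω) ω := by linarith
  calc m * c ≤ g (That ω) ω := le_trans hmc hg
    _ ≤ |g (That ω) ω| := le_abs_self _
    _ ≤ S.sup' hS fun t => |g t ω| := Finset.le_sup' (fun t => |g t ω|) (hThatS ω)
end

section
/- Let D be a nonempty subset of S with T_b⁰ ∉ D, and suppose there are positive real constants w_t > 0 (t ∈ D) such that Q_t(ω) − Q_{T_b⁰}(ω) = −w_t·r_t(ω) + g_t(ω) for all t ∈ D and ω ∈ Ω. Then P(T̂ ∈ D) ≤ P(max_{t∈D} g_t/w_t ≥ min_{t∈D} r_t). -/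
open MeasureTheory

/-- If the criterion decomposes as `Q_t − Q_{T_b⁰} = −w_t·r_t + g_t` on a set
`D ⊆ S` not containing `T_b⁰`, with weights `w_t > 0`, then
`P(T̂ ∈ D) ≤ P(max_{t∈D} g_t/w_t ≥ min_{t∈D} r_t)`. -/
theorem statement7
    {Ω : Type*} [MeasurableSpace Ω] (μ : Measure Ω) [IsProbabilityMeasure μ]
    (S : Finset ℤ) (hS : S.Nonempty) (Tb0 : ℤ) (hTb0 : Tb0 ∈ S)
    (Q r g : ℤ → Ω → ℝ)
    (That : Ω → ℤ) (hThatS : ∀ ω, That ω ∈ S)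
    (hargmax : ∀ ω, ∀ t ∈ S, Q t ω ≤ Q (That ω) ω)
    (D : Finset ℤ) (hD : D.Nonempty) (hDS : D ⊆ S) (hTb0D : Tb0 ∉ D)
    (w : ℤ → ℝ) (hw : ∀ t ∈ D, 0 < w t)
    (hdecomp : ∀ t ∈ D, ∀ ω, Q t ω - Q Tb0 ω = -(w t) * r t ω + g t ω) :
    μ {ω | That ω ∈ D}
      ≤ μ {ω | (D.inf' hD fun t => r t ω) ≤ D.sup' hD fun t => g t ω / w t} := by
  apply measure_mono
  intro ω hω
  simp only [Set.mem_setOf_eq] at hω ⊢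
  set t := That ω with ht
  have h1 : Q Tb0 ω ≤ Q t ω := hargmax ω Tb0 hTb0
  have h2 := hdecomp t hω ω
  have hwt := hw t hω
  have hr : r t ω ≤ g t ω / w t := by
    rw [le_div_iff₀ hwt]
    nlinarith
  calc (D.inf' hD fun s => r s ω) ≤ r t ω := Finset.inf'_le _ hω
    _ ≤ g t ω / w t := hr
    _ ≤ D.sup' hD fun s => g s ω / w s := Finset.le_sup' (fun s => g s ω / w s) hω
end

section
/- Suppose T_b ≠ T_b⁰ and that Z₂'MZ₂ and Z₀'MZ₀ are invertible. Then Q_T(T_b) − Q_T(T_b⁰) = −δ⁰'[Z_Δ'MZ_Δ − (Z_Δ'MZ₂)(Z₂'MZ₂)⁻¹(Z₂'MZ_Δ)]δ⁰ + g_e(T_b), where g_e(T_b) := 2δ⁰'(Z₀'MZ₂)(Z₂'MZ₂)⁻¹Z₂'Me − 2δ⁰'Z₀'Me + e'MZ₂(Z₂'MZ₂)⁻¹Z₂'Me − e'MZ₀(Z₀'MZ₀)⁻¹Z₀'Me. -/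
open Matrix

private lemma dot_aux {m n : ℕ} (A : Matrix (Fin m) (Fin n) ℝ) (v : Fin n → ℝ) (w : Fin m → ℝ) :
    (A *ᵥ v) ⬝ᵥ w = v ⬝ᵥ (Aᵀ *ᵥ w) := by
  rw [dotProduct_comm, dotProduct_mulVec, ← Matrix.mulVec_transpose, dotProduct_comm]

private lemma quad_aux {n : ℕ} (K : Matrix (Fin n) (Fin n) ℝ) (hK : Kᵀ = K) (v w : Fin n → ℝ) :
    (v + w) ⬝ᵥ (K *ᵥ (v + w)) =
      v ⬝ᵥ (K *ᵥ v) + 2 * (v ⬝ᵥ (K *ᵥ w)) + w ⬝ᵥ (K *ᵥ w) := by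
  have hc : w ⬝ᵥ (K *ᵥ v) = v ⬝ᵥ (K *ᵥ w) := by
    rw [← dotProduct_comm, dot_aux, hK]
  rw [mulVec_add, dotProduct_add, add_dotProduct, add_dotProduct, hc]
  ring

private lemma key_aux {T' p' : ℕ} (M : Matrix (Fin T') (Fin T') ℝ)
    (Z₂ ZΔ Z₀ : Matrix (Fin T') (Fin p') ℝ) (K : Matrix (Fin p') (Fin p') ℝ)
    (hAK : Z₂ᵀ * M * Z₂ * K = 1) (hKA : K * (Z₂ᵀ * M * Z₂) = 1)
    (hZ₀ : Z₀ = Z₂ - ZΔ ∨ Z₀ = Z₂ + ZΔ) :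
    (Z₀ᵀ * M * Z₂) * K * (Z₂ᵀ * M * Z₀) - Z₀ᵀ * M * Z₀ =
      -(ZΔᵀ * M * ZΔ - (ZΔᵀ * M * Z₂) * K * (Z₂ᵀ * M * ZΔ)) := by
  have haKa : (Z₂ᵀ * M * Z₂) * K * (Z₂ᵀ * M * Z₂) = Z₂ᵀ * M * Z₂ := by
    rw [hAK, one_mul]
  have haKc : ∀ c, (Z₂ᵀ * M * Z₂) * K * c = c := fun c => by rw [hAK, one_mul]
  have hbKa : ∀ b, b * K * (Z₂ᵀ * M * Z₂) = b := fun b => by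
    rw [Matrix.mul_assoc, hKA, mul_one]
  rcases hZ₀ with h | h <;> subst h
  · have e1 : ((Z₂ - ZΔ)ᵀ * M * Z₂) * K * (Z₂ᵀ * M * (Z₂ - ZΔ)) =
        (Z₂ᵀ * M * Z₂) * K * (Z₂ᵀ * M * Z₂) - (Z₂ᵀ * M * Z₂) * K * (Z₂ᵀ * M * ZΔ)
          - (ZΔᵀ * M * Z₂) * K * (Z₂ᵀ * M * Z₂)
          + (ZΔᵀ * M * Z₂) * K * (Z₂ᵀ * M * ZΔ) := by
      simp only [transpose_sub, Matrix.sub_mul, Matrix.mul_sub]; abel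
    have e2 : (Z₂ - ZΔ)ᵀ * M * (Z₂ - ZΔ) =
        Z₂ᵀ * M * Z₂ - Z₂ᵀ * M * ZΔ - ZΔᵀ * M * Z₂ + ZΔᵀ * M * ZΔ := by
      simp only [transpose_sub, Matrix.sub_mul, Matrix.mul_sub]; abel
    rw [e1, e2, haKa, haKc, hbKa]; abel
  · have e1 : ((Z₂ + ZΔ)ᵀ * M * Z₂) * K * (Z₂ᵀ * M * (Z₂ + ZΔ)) =
        (Z₂ᵀ * M * Z₂) * K * (Z₂ᵀ * M * Z₂) + (Z₂ᵀ * M * Z₂) * K * (Z₂ᵀ * M * ZΔ)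
          + (ZΔᵀ * M * Z₂) * K * (Z₂ᵀ * M * Z₂)
          + (ZΔᵀ * M * Z₂) * K * (Z₂ᵀ * M * ZΔ) := by
      simp only [transpose_add, Matrix.add_mul, Matrix.mul_add]; abel
    have e2 : (Z₂ + ZΔ)ᵀ * M * (Z₂ + ZΔ) =
        Z₂ᵀ * M * Z₂ + Z₂ᵀ * M * ZΔ + ZΔᵀ * M * Z₂ + ZΔᵀ * M * ZΔ := by
      simp only [transpose_add, Matrix.add_mul, Matrix.mul_add]; abel
    rw [e1, e2, haKa, haKc, hbKa]; abel

private lemma Q_aux {n : ℕ} (A K : Matrix (Fin n) (Fin n) ℝ) (hKsym : Kᵀ = K)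
    (hKA : K * A = 1) (u : Fin n → ℝ) :
    (K *ᵥ u) ⬝ᵥ (A *ᵥ (K *ᵥ u)) = u ⬝ᵥ (K *ᵥ u) := by
  rw [dot_aux, hKsym, mulVec_mulVec, mulVec_mulVec, hKA, Matrix.one_mul]

private lemma tri_aux {n m l : ℕ} (A : Matrix (Fin n) (Fin m) ℝ)
    (K : Matrix (Fin n) (Fin n) ℝ) (B : Matrix (Fin n) (Fin l) ℝ) (x : Fin m → ℝ)
    (y : Fin l → ℝ) :
    (A *ᵥ x) ⬝ᵥ (K *ᵥ (B *ᵥ y)) = x ⬝ᵥ ((Aᵀ * K * B) *ᵥ y) := by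
  rw [dot_aux, mulVec_mulVec, mulVec_mulVec]

/-- Decomposition (Lemma A.3 applied to eq. (45)): for `T_b ≠ T_b⁰`,
`Q_T(T_b) − Q_T(T_b⁰)
  = −δ⁰'[Z_Δ'MZ_Δ − (Z_Δ'MZ₂)(Z₂'MZ₂)⁻¹(Z₂'MZ_Δ)]δ⁰ + g_e(T_b)`. -/
theorem statement13
    (T q p : ℕ) (hT : 0 < T) (hq : 0 < q) (hp : 0 < p)
    (Tb Tb0 : ℕ) (hTbpos : 0 < Tb) (hTbT : Tb < T) (hTb0pos : 0 < Tb0) (hTb0T : Tb0 < T)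
    (hne : Tb ≠ Tb0)
    (X X₂ X₀ XΔ : Matrix (Fin T) (Fin (q + p)) ℝ)
    (hX₂ : ∀ i j, X₂ i j = if Tb ≤ (i : ℕ) then X i j else 0)
    (hX₀ : ∀ i j, X₀ i j = if Tb0 ≤ (i : ℕ) then X i j else 0)
    (hXΔ : XΔ = if Tb < Tb0 then X₂ - X₀ else X₀ - X₂)
    (R : Matrix (Fin (q + p)) (Fin p) ℝ) (hR : R.rank = p)
    (Z₂ Z₀ ZΔ : Matrix (Fin T) (Fin p) ℝ)
    (hZ₂ : Z₂ = X₂ * R) (hZ₀ : Z₀ = X₀ * R) (hZΔ : ZΔ = XΔ * R)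
    (hXX : IsUnit (Xᵀ * X).det)
    (M : Matrix (Fin T) (Fin T) ℝ)
    (hM : M = 1 - X * (Xᵀ * X)⁻¹ * Xᵀ)
    (β₀ : Fin (q + p) → ℝ) (δ₀ : Fin p → ℝ) (e Y : Fin T → ℝ)
    (hY : Y = X *ᵥ β₀ + Z₀ *ᵥ δ₀ + e)
    (hZ₂inv : IsUnit (Z₂ᵀ * M * Z₂).det)
    (hZ₀inv : IsUnit (Z₀ᵀ * M * Z₀).det)
    (δhat₂ δhat₀ : Fin p → ℝ)
    (hδhat₂ : δhat₂ = ((Z₂ᵀ * M * Z₂)⁻¹ * (Z₂ᵀ * M)) *ᵥ Y)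
    (hδhat₀ : δhat₀ = ((Z₀ᵀ * M * Z₀)⁻¹ * (Z₀ᵀ * M)) *ᵥ Y)
    (QTb QTb0 : ℝ)
    (hQTb : QTb = δhat₂ ⬝ᵥ ((Z₂ᵀ * M * Z₂) *ᵥ δhat₂))
    (hQTb0 : QTb0 = δhat₀ ⬝ᵥ ((Z₀ᵀ * M * Z₀) *ᵥ δhat₀)) :
    QTb - QTb0 =
      -(δ₀ ⬝ᵥ ((ZΔᵀ * M * ZΔ - (ZΔᵀ * M * Z₂) * (Z₂ᵀ * M * Z₂)⁻¹ * (Z₂ᵀ * M * ZΔ)) *ᵥ δ₀))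
        + (2 * (δ₀ ⬝ᵥ (((Z₀ᵀ * M * Z₂) * (Z₂ᵀ * M * Z₂)⁻¹ * (Z₂ᵀ * M)) *ᵥ e))
            - 2 * (δ₀ ⬝ᵥ ((Z₀ᵀ * M) *ᵥ e))
            + e ⬝ᵥ ((M * Z₂ * (Z₂ᵀ * M * Z₂)⁻¹ * (Z₂ᵀ * M)) *ᵥ e)
            - e ⬝ᵥ ((M * Z₀ * (Z₀ᵀ * M * Z₀)⁻¹ * (Z₀ᵀ * M)) *ᵥ e)) := by
  have hMsym : Mᵀ = M := by
    rw [hM]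
    simp [transpose_sub, transpose_mul, Matrix.transpose_nonsing_inv, Matrix.mul_assoc]
  have hMX : M * X = 0 := by
    rw [hM, Matrix.sub_mul, Matrix.one_mul, Matrix.mul_assoc (X * (Xᵀ * X)⁻¹), Matrix.mul_assoc,
      Matrix.nonsing_inv_mul _ hXX, Matrix.mul_one, sub_self]
  set A₂ := Z₂ᵀ * M * Z₂ with hA₂
  set A₀ := Z₀ᵀ * M * Z₀ with hA₀
  set K := A₂⁻¹ with hK
  set K₀ := A₀⁻¹ with hK₀
  have hA₂sym : A₂ᵀ = A₂ := by
    rw [hA₂, transpose_mul, transpose_mul, transpose_transpose, hMsym, Matrix.mul_assoc]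
  have hA₀sym : A₀ᵀ = A₀ := by
    rw [hA₀, transpose_mul, transpose_mul, transpose_transpose, hMsym, Matrix.mul_assoc]
  have hKsym : Kᵀ = K := by rw [hK, Matrix.transpose_nonsing_inv, hA₂sym]
  have hK₀sym : K₀ᵀ = K₀ := by rw [hK₀, Matrix.transpose_nonsing_inv, hA₀sym]
  have hAK : A₂ * K = 1 := Matrix.mul_nonsing_inv _ hZ₂inv
  have hKA : K * A₂ = 1 := Matrix.nonsing_inv_mul _ hZ₂inv
  have hAK₀ : A₀ * K₀ = 1 := Matrix.mul_nonsing_inv _ hZ₀inv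
  have hKA₀ : K₀ * A₀ = 1 := Matrix.nonsing_inv_mul _ hZ₀inv
  have hZ₂MX : Z₂ᵀ * M * X = 0 := by rw [Matrix.mul_assoc, hMX, Matrix.mul_zero]
  have hZ₀MX : Z₀ᵀ * M * X = 0 := by rw [Matrix.mul_assoc, hMX, Matrix.mul_zero]
  have hu2 : (Z₂ᵀ * M) *ᵥ Y = (Z₂ᵀ * M * Z₀) *ᵥ δ₀ + (Z₂ᵀ * M) *ᵥ e := by
    rw [hY, mulVec_add, mulVec_add, mulVec_mulVec, mulVec_mulVec, hZ₂MX, zero_mulVec, zero_add]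
  have hu0 : (Z₀ᵀ * M) *ᵥ Y = A₀ *ᵥ δ₀ + (Z₀ᵀ * M) *ᵥ e := by
    rw [hY, mulVec_add, mulVec_add, mulVec_mulVec, mulVec_mulVec, hZ₀MX, zero_mulVec, zero_add,
      hA₀]
  have hd2 : δhat₂ = K *ᵥ ((Z₂ᵀ * M) *ᵥ Y) := by rw [hδhat₂, mulVec_mulVec]
  have hd0 : δhat₀ = K₀ *ᵥ ((Z₀ᵀ * M) *ᵥ Y) := by rw [hδhat₀, mulVec_mulVec]
  have hQ2u : QTb = ((Z₂ᵀ * M) *ᵥ Y) ⬝ᵥ (K *ᵥ ((Z₂ᵀ * M) *ᵥ Y)) := by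
    rw [hQTb, hd2, Q_aux A₂ K hKsym hKA]
  have hQ0u : QTb0 = ((Z₀ᵀ * M) *ᵥ Y) ⬝ᵥ (K₀ *ᵥ ((Z₀ᵀ * M) *ᵥ Y)) := by
    rw [hQTb0, hd0, Q_aux A₀ K₀ hK₀sym hKA₀]
  have hT20 : (Z₂ᵀ * M * Z₀)ᵀ = Z₀ᵀ * M * Z₂ := by
    rw [transpose_mul, transpose_mul, transpose_transpose, hMsym, Matrix.mul_assoc]
  have hT2 : (Z₂ᵀ * M)ᵀ = M * Z₂ := by rw [transpose_mul, transpose_transpose, hMsym]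
  have hT0 : (Z₀ᵀ * M)ᵀ = M * Z₀ := by rw [transpose_mul, transpose_transpose, hMsym]
  have hQ2 : QTb = δ₀ ⬝ᵥ ((Z₀ᵀ * M * Z₂ * K * (Z₂ᵀ * M * Z₀)) *ᵥ δ₀)
      + 2 * (δ₀ ⬝ᵥ ((Z₀ᵀ * M * Z₂ * K * (Z₂ᵀ * M)) *ᵥ e))
      + e ⬝ᵥ ((M * Z₂ * K * (Z₂ᵀ * M)) *ᵥ e) := by
    rw [hQ2u, hu2, quad_aux K hKsym, tri_aux, tri_aux, tri_aux, hT20, hT2]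
  have hQ0 : QTb0 = δ₀ ⬝ᵥ (A₀ *ᵥ δ₀)
      + 2 * (δ₀ ⬝ᵥ ((Z₀ᵀ * M) *ᵥ e))
      + e ⬝ᵥ ((M * Z₀ * K₀ * (Z₀ᵀ * M)) *ᵥ e) := by
    rw [hQ0u, hu0, quad_aux K₀ hK₀sym, tri_aux, tri_aux, tri_aux, hA₀sym, hT0, hAK₀,
      Matrix.one_mul, Matrix.one_mul]
  have hZ₀rel : Z₀ = Z₂ - ZΔ ∨ Z₀ = Z₂ + ZΔ := by
    rcases lt_or_gt_of_ne hne with h | h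
    · left
      rw [hZΔ, hXΔ, if_pos h, Matrix.sub_mul, ← hZ₂, ← hZ₀]
      abel
    · right
      rw [hZΔ, hXΔ, if_neg (not_lt_of_gt h), Matrix.sub_mul, ← hZ₂, ← hZ₀]
      abel
  have hkey := key_aux M Z₂ ZΔ Z₀ K hAK hKA hZ₀rel
  have hsplit : δ₀ ⬝ᵥ ((Z₀ᵀ * M * Z₂ * K * (Z₂ᵀ * M * Z₀)) *ᵥ δ₀) - δ₀ ⬝ᵥ (A₀ *ᵥ δ₀)
      = -(δ₀ ⬝ᵥ ((ZΔᵀ * M * ZΔ - (ZΔᵀ * M * Z₂) * K * (Z₂ᵀ * M * ZΔ)) *ᵥ δ₀)) := by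
    rw [← dotProduct_sub, ← sub_mulVec, hA₀, hkey, neg_mulVec, dotProduct_neg]
  rw [hQ2, hQ0]
  rw [show ∀ a b c a' b' c' : ℝ, (a + 2*b + c) - (a' + 2*b' + c')
      = (a - a') + (2*b - 2*b' + c - c') from fun _ _ _ _ _ _ => by ring]
  rw [hsplit]
end
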